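/- arXiv:2201.03715 — 2 statements merged into one kernel-verified Lean document; each statement's English description precedes it below -/
import Mathlib

section
/- Let x, x̂ ∈ ℂ with x ≠ 0, x̂ ≠ 0, and suppose |x̂ - x| ≤ ε|x| for some ε ∈ (0,1). Then 1 - ε ≤ cos(arg(x̂) - arg(x)). -/
/-!
Dividing by `x` reduces the claim to `w = xh / x`, which satisfies `‖w - 1‖ ≤ ε` and whose
argument agrees with `arg xh - arg x` modulo `2π`. Expanding `‖w - 1‖² ≤ ε²` gives
`2 Re w ≥ ‖w‖² + 1 - ε²`, and `‖w‖² + 1 - ε² - 2(1 - ε)‖w‖ = (‖w‖ - (1 - ε))² + 2ε(1 - ε) ≥ 0`,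
so `Re w ≥ (1 - ε) ‖w‖`, i.e. `cos (arg w) ≥ 1 - ε`.
-/

namespace Complex

theorem one_sub_mul_norm_le_re_of_norm_sub_one_le {w : ℂ} {ε : ℝ} (hε0 : 0 ≤ ε) (hε1 : ε ≤ 1)
    (h : ‖w - 1‖ ≤ ε) : (1 - ε) * ‖w‖ ≤ w.re := by
  have hsq : ‖w - 1‖ ^ 2 = ‖w‖ ^ 2 - 2 * w.re + 1 := by
    rw [Complex.sq_norm, Complex.sq_norm, normSq_apply, normSq_apply]
    simp only [sub_re, sub_im, one_re, one_im]
    ring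
  have hle : ‖w - 1‖ ^ 2 ≤ ε ^ 2 := pow_le_pow_left₀ (norm_nonneg _) h 2
  nlinarith [sq_nonneg (‖w‖ - (1 - ε)), mul_nonneg hε0 (sub_nonneg.mpr hε1)]

theorem one_sub_le_cos_arg_of_norm_sub_one_le {w : ℂ} (hw : w ≠ 0) {ε : ℝ} (hε0 : 0 ≤ ε)
    (hε1 : ε ≤ 1) (h : ‖w - 1‖ ≤ ε) : 1 - ε ≤ Real.cos (arg w) := by
  rw [cos_arg hw, le_div_iff₀ (norm_pos_iff.mpr hw)]
  exact one_sub_mul_norm_le_re_of_norm_sub_one_le hε0 hε1 h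

theorem cos_arg_sub_arg {x y : ℂ} (hx : x ≠ 0) (hy : y ≠ 0) :
    Real.cos (arg y - arg x) = Real.cos (arg (y / x)) := by
  rw [← Real.Angle.cos_coe, Real.Angle.coe_sub, ← arg_div_coe_angle hy hx, Real.Angle.cos_coe]

end Complex

theorem stmt_2 (x xh : ℂ) (hx : x ≠ 0) (hxh : xh ≠ 0) (ε : ℝ) (hε0 : 0 < ε) (hε1 : ε < 1)
    (h : ‖xh - x‖ ≤ ε * ‖x‖) :
    1 - ε ≤ Real.cos (Complex.arg xh - Complex.arg x) := by
  have hrel : ‖xh / x - 1‖ ≤ ε := by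
    rw [div_sub_one hx, norm_div, div_le_iff₀ (norm_pos_iff.mpr hx)]
    exact h
  rw [Complex.cos_arg_sub_arg hx hxh]
  exact Complex.one_sub_le_cos_arg_of_norm_sub_one_le (div_ne_zero hxh hx) hε0.le hε1.le hrel
end

section
/- Let f : ℂ^m → ℂⁿ be differentiable at 0 with f(0) = 0, satisfying: (i) for ω uniform on the unit sphere of ℂ^m, lim_{t→0⁺} t⁻² E[‖f(tω) - t Df(0)ω‖₂²] = 0, and (ii) there exist C, r, α > 0 with ‖f(y)‖₂ ≤ C‖y‖₂^α for ‖y‖₂ > r. Then for z a standard complex Gaussian on ℂ^m, lim_{σ→0} E[f(σz)] = 0. -/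
/-!
Continuity bounds `f` on a ball and the growth condition bounds it outside, so
`‖f y‖ ≤ M + K ‖y‖ ^ α` everywhere. A Gaussian vector has moments of all orders, so for
`|σ| ≤ 1` the integrable function `M + K ‖z‖ ^ α` dominates `f (σ • z)`, and dominated
convergence gives `E[f (σ z)] → f 0 = 0`.
-/

open MeasureTheory ProbabilityTheory Matrix Filter

/-- The standard complex Gaussian measure on `ℂ^m`. -/
noncomputable def stdComplexGaussian (m : ℕ) : Measure (Fin m → ℂ) :=
  Measure.pi fun _ : Fin m =>
    ((gaussianReal 0 1).prod (gaussianReal 0 1)).map fun p : ℝ × ℝ => (p.1 + p.2 * Complex.I)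

/-- The Euclidean (ℓ²) norm of a finitely supported complex vector. -/
noncomputable def l2norm {ι : Type*} [Fintype ι] (v : ι → ℂ) : ℝ :=
  Real.sqrt (∑ i, Complex.normSq (v i))

/-- Radial projection onto the unit sphere of `ℂ^m`. -/
noncomputable def dirSphere (m : ℕ) (z : Fin m → ℂ) : Fin m → ℂ :=
  fun i => z i / (l2norm z : ℂ)

/-- The uniform probability measure on the unit sphere of `ℂ^m`, realized as the
law of the direction of a standard complex Gaussian vector. -/
noncomputable def uniformSphere (m : ℕ) : Measure (Fin m → ℂ) :=
  (stdComplexGaussian m).map (dirSphere m)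

open scoped Topology

section GrowthBound

variable {E F : Type*} [NormedAddCommGroup E] [NormedAddCommGroup F]

theorem exists_norm_le_add_mul_rpow [ProperSpace E] {f : E → F} (hf : Continuous f)
    {R K α : ℝ} (hK : 0 ≤ K) (hgrowth : ∀ y, R < ‖y‖ → ‖f y‖ ≤ K * ‖y‖ ^ α) :
    ∃ M, ∀ y, ‖f y‖ ≤ M + K * ‖y‖ ^ α := by
  obtain ⟨M, hM⟩ := (isCompact_closedBall (0 : E) R).exists_bound_of_continuousOn
    hf.continuousOn
  refine ⟨max M 0, fun y => ?_⟩
  have hpow : 0 ≤ K * ‖y‖ ^ α := by positivity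
  rcases le_or_gt ‖y‖ R with hy | hy
  · have := hM y (mem_closedBall_zero_iff.mpr hy)
    linarith [le_max_left M 0]
  · linarith [hgrowth y hy, le_max_right M 0]

theorem tendsto_integral_comp_smul_of_growth [NormedSpace ℝ E] [FiniteDimensional ℝ E]
    [NormedSpace ℝ F] [CompleteSpace F] [MeasurableSpace E]
    [BorelSpace E] (μ : Measure E) [IsProbabilityMeasure μ] {f : E → F} (hf : Continuous f)
    {R K α : ℝ} (hK : 0 ≤ K) (hα : 0 ≤ α) (hgrowth : ∀ y, R < ‖y‖ → ‖f y‖ ≤ K * ‖y‖ ^ α)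
    (hint : Integrable (fun x => ‖x‖ ^ α) μ) :
    Tendsto (fun σ : ℝ => ∫ x, f (σ • x) ∂μ) (𝓝 0) (𝓝 (f 0)) := by
  obtain ⟨M, hM⟩ := exists_norm_le_add_mul_rpow hf hK hgrowth
  have hlim := tendsto_integral_filter_of_dominated_convergence (μ := μ) (l := 𝓝 (0 : ℝ))
    (F := fun σ x => f (σ • x)) (f := fun _ => f 0) (fun x => M + K * ‖x‖ ^ α)
    (.of_forall fun σ => (hf.comp (continuous_const_smul σ)).aestronglyMeasurable) ?_
    ((integrable_const M).add (hint.const_mul K)) ?_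
  · simpa using hlim
  · filter_upwards [Metric.closedBall_mem_nhds (0 : ℝ) one_pos] with σ hσ
    refine .of_forall fun x => (hM _).trans ?_
    have hσx : ‖σ • x‖ ≤ ‖x‖ := by
      rw [norm_smul]
      exact mul_le_of_le_one_left (norm_nonneg x) (mem_closedBall_zero_iff.mp hσ)
    gcongr
  · refine .of_forall fun x => ?_
    exact (hf.tendsto _).comp (by simpa using (tendsto_id (x := 𝓝 (0 : ℝ))).smul_const x)

end GrowthBound

theorem memLp_id_pi {ι : Type*} [Fintype ι] {E : ι → Type*} [∀ i, NormedAddCommGroup (E i)]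
    [∀ i, MeasurableSpace (E i)] (μ : ∀ i, Measure (E i)) [∀ i, IsProbabilityMeasure (μ i)]
    {p : ENNReal} (hμ : ∀ i, MemLp id p (μ i)) : MemLp id p (Measure.pi μ) :=
  memLp_pi_iff.mpr fun i => (hμ i).comp_measurePreserving (measurePreserving_eval μ i)

instance isGaussian_complexGaussian :
    IsGaussian (((gaussianReal 0 1).prod (gaussianReal 0 1)).map
      fun p : ℝ × ℝ => (p.1 + p.2 * Complex.I)) := by
  simp_rw [← Complex.equivRealProdCLM_symm_apply]
  infer_instance

theorem memLp_id_stdComplexGaussian (m : ℕ) {p : ENNReal} (hp : p ≠ ⊤) :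
    MemLp id p (stdComplexGaussian m) :=
  memLp_id_pi _ fun _ => IsGaussian.memLp_id _ p hp

instance (m : ℕ) : IsProbabilityMeasure (stdComplexGaussian m) := by
  unfold stdComplexGaussian
  infer_instance

theorem norm_le_l2norm {ι : Type*} [Fintype ι] (v : ι → ℂ) : ‖v‖ ≤ l2norm v := by
  refine (pi_norm_le_iff_of_nonneg (Real.sqrt_nonneg _)).mpr fun i => ?_
  rw [Complex.norm_def]
  exact Real.sqrt_le_sqrt (Finset.single_le_sum (fun j _ => Complex.normSq_nonneg (v j))
    (Finset.mem_univ i))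

theorem l2norm_le_sqrt_card_mul_norm {ι : Type*} [Fintype ι] (v : ι → ℂ) :
    l2norm v ≤ √(Fintype.card ι) * ‖v‖ := by
  rw [l2norm, ← Real.sqrt_sq (norm_nonneg v), ← Real.sqrt_mul (Nat.cast_nonneg _)]
  refine Real.sqrt_le_sqrt ?_
  calc ∑ i, Complex.normSq (v i) = ∑ i, ‖v i‖ ^ 2 := by simp [Complex.normSq_eq_norm_sq]
    _ ≤ ∑ _i : ι, ‖v‖ ^ 2 := by gcongr with i; exact norm_le_pi_norm v i
    _ = Fintype.card ι * ‖v‖ ^ 2 := by simp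

theorem stmt_13_general (m n : ℕ) (f : (Fin m → ℂ) → Fin n → ℂ)
    (hf : Continuous f) (hf0 : f 0 = 0)
    (C r α : ℝ) (hC : 0 < C) (hα : 0 < α)
    (hgrowth : ∀ y, r < l2norm y → l2norm (f y) ≤ C * l2norm y ^ α) :
    Tendsto (fun σ : ℝ => ∫ z, f (σ • z) ∂(stdComplexGaussian m))
      (nhdsWithin 0 (Set.Ioi 0)) (nhds 0) := by
  have hgrowth_sup : ∀ y, r < ‖y‖ → ‖f y‖ ≤ C * √m ^ α * ‖y‖ ^ α := fun y hy => calc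
    ‖f y‖ ≤ l2norm (f y) := norm_le_l2norm _
    _ ≤ C * l2norm y ^ α := hgrowth y (hy.trans_le (norm_le_l2norm y))
    _ ≤ C * (√m * ‖y‖) ^ α := by
      gcongr
      · exact Real.sqrt_nonneg _
      · simpa using l2norm_le_sqrt_card_mul_norm y
    _ = C * √m ^ α * ‖y‖ ^ α := by rw [Real.mul_rpow (by positivity) (norm_nonneg y), mul_assoc]
  have hint : Integrable (fun z => ‖z‖ ^ α) (stdComplexGaussian m) := by
    simpa [hα.le] using (memLp_id_stdComplexGaussian m (p := .ofReal α) ENNReal.ofReal_ne_top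
      ).integrable_norm_rpow (by simpa using hα) ENNReal.ofReal_ne_top
  simpa [hf0] using (tendsto_integral_comp_smul_of_growth _ hf (by positivity) hα.le
    hgrowth_sup hint).mono_left nhdsWithin_le_nhds

/-- Noiseless limit of the mean: under differentiability at the origin with
L² Gateaux control along uniform sphere directions and polynomial growth,
`E[f(σz)] → 0` as `σ → 0⁺`. -/
theorem stmt_13 (m n : ℕ) (f : (Fin m → ℂ) → Fin n → ℂ)
    (hf : Continuous f) (hf0 : f 0 = 0)
    (D : (Fin m → ℂ) →L[ℝ] (Fin n → ℂ)) (hD : HasFDerivAt f D 0)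
    (hL2 : Tendsto
      (fun t : ℝ => (t ^ 2)⁻¹ *
        ∫ ω, l2norm (fun i => f (t • ω) i - t • D ω i) ^ 2 ∂(uniformSphere m))
      (nhdsWithin 0 (Set.Ioi 0)) (nhds 0))
    (C r α : ℝ) (hC : 0 < C) (hr : 0 < r) (hα : 0 < α)
    (hgrowth : ∀ y, r < l2norm y → l2norm (f y) ≤ C * l2norm y ^ α) :
    Tendsto (fun σ : ℝ => ∫ z, f (σ • z) ∂(stdComplexGaussian m))
      (nhdsWithin 0 (Set.Ioi 0)) (nhds 0) :=
  stmt_13_general m n f hf hf0 C r α hC hα hgrowth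
end
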